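/- Let H = (H0, H1) be a consistent partial condition over a nonempty finite set T in which every member of H0 ∪ H1 is nonempty, and assume T ∈ H0 ∪ H1. Then there exists a parity condition κ : T → ℕ consistent with H if and only if there do not exist P1, …, Pk ∈ H0 and N1, …, Nl ∈ H1 (with k, l ≥ 1) such that P1 ∪ ⋯ ∪ Pk = N1 ∪ ⋯ ∪ Nl. -/
import Mathlib

open Set

namespace ParityAux

variable {T : Type*}

/-- Alternating side of the peeling chain. -/
def side (H0 H1 : Set (Set T)) (b j : ℕ) : Set (Set T) :=
  if Even (j + b) then H0 else H1

/-- The peeling chain of sets. -/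
def V (H0 H1 : Set (Set T)) (b : ℕ) : ℕ → Set T
  | 0 => Set.univ
  | (j+1) => ⋃₀ {X | X ∈ side H0 H1 b (j+1) ∧ X ⊆ V H0 H1 b j}

/-- The family whose union is `V j`. -/
def Fam (H0 H1 : Set (Set T)) (b : ℕ) : ℕ → Set (Set T)
  | 0 => {Set.univ}
  | (j+1) => {X | X ∈ side H0 H1 b (j+1) ∧ X ⊆ V H0 H1 b j}

lemma V_eq_sUnion (H0 H1 : Set (Set T)) (b j : ℕ) :
    V H0 H1 b j = ⋃₀ Fam H0 H1 b j := by
  cases j <;> simp [V, Fam]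

lemma V_succ_subset (H0 H1 : Set (Set T)) (b j : ℕ) :
    V H0 H1 b (j+1) ⊆ V H0 H1 b j := by
  intro t ht
  obtain ⟨X, ⟨-, hX⟩, htX⟩ := ht
  exact hX htX

lemma V_antitone (H0 H1 : Set (Set T)) (b : ℕ) : Antitone (V H0 H1 b) :=
  antitone_nat_of_succ_le fun j => V_succ_subset H0 H1 b j

lemma Fam_subset_side (H0 H1 : Set (Set T)) (b : ℕ)
    (hb : Set.univ ∈ side H0 H1 b 0) (j : ℕ) :
    Fam H0 H1 b j ⊆ side H0 H1 b j := by
  cases j with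
  | zero => intro X hX; rw [Fam, mem_singleton_iff] at hX; subst hX; exact hb
  | succ j => intro X hX; exact hX.1

lemma side_cases (H0 H1 : Set (Set T)) (b j : ℕ) :
    (side H0 H1 b j = H0 ∧ side H0 H1 b (j+1) = H1) ∨
      (side H0 H1 b j = H1 ∧ side H0 H1 b (j+1) = H0) := by
  rcases Nat.even_or_odd (j + b) with h | h
  · left
    constructor
    · simp [side, h]
    · have : ¬ Even (j + 1 + b) := by
        have : j + 1 + b = (j + b) + 1 := by ring
        rw [this, Nat.even_add_one]; simpa using h
      simp [side, this]
  · right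
    have h' : ¬ Even (j + b) := Nat.not_even_iff_odd.mpr h
    constructor
    · simp [side, h']
    · have : Even (j + 1 + b) := by
        have : j + 1 + b = (j + b) + 1 := by ring
        rw [this, Nat.even_add_one]; simpa using h'
      simp [side, this]

lemma stab (H0 H1 : Set (Set T)) (b : ℕ)
    (hb : Set.univ ∈ side H0 H1 b 0)
    (hno : ¬∃ P N : Set (Set T),
        P ⊆ H0 ∧ N ⊆ H1 ∧ P.Nonempty ∧ N.Nonempty ∧ ⋃₀ P = ⋃₀ N)
    (j : ℕ) (heq : V H0 H1 b (j+1) = V H0 H1 b j) :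
    V H0 H1 b j = ∅ := by
  by_contra hne
  have hVj : (V H0 H1 b j).Nonempty := nonempty_iff_ne_empty.mpr hne
  have hFj : (Fam H0 H1 b j).Nonempty := by
    obtain ⟨t, ht⟩ := hVj
    rw [V_eq_sUnion] at ht
    obtain ⟨X, hX, -⟩ := ht
    exact ⟨X, hX⟩
  have hFj1 : (Fam H0 H1 b (j+1)).Nonempty := by
    have : (V H0 H1 b (j+1)).Nonempty := heq ▸ hVj
    obtain ⟨t, ht⟩ := this
    rw [V_eq_sUnion] at ht
    obtain ⟨X, hX, -⟩ := ht
    exact ⟨X, hX⟩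
  have hUeq : ⋃₀ Fam H0 H1 b j = ⋃₀ Fam H0 H1 b (j+1) := by
    rw [← V_eq_sUnion, ← V_eq_sUnion, heq]
  have hs0 := Fam_subset_side H0 H1 b hb j
  have hs1 := Fam_subset_side H0 H1 b hb (j+1)
  rcases side_cases H0 H1 b j with ⟨e0, e1⟩ | ⟨e0, e1⟩
  · rw [e0] at hs0; rw [e1] at hs1
    exact hno ⟨Fam H0 H1 b j, Fam H0 H1 b (j+1), hs0, hs1, hFj, hFj1, hUeq⟩
  · rw [e0] at hs0; rw [e1] at hs1
    exact hno ⟨Fam H0 H1 b (j+1), Fam H0 H1 b j, hs1, hs0, hFj1, hFj, hUeq.symm⟩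

lemma eventually_empty [Fintype T] (H0 H1 : Set (Set T)) (b : ℕ)
    (hstab : ∀ j, V H0 H1 b (j+1) = V H0 H1 b j → V H0 H1 b j = ∅) :
    ∃ n, V H0 H1 b n = ∅ := by
  have key : ∀ j, (V H0 H1 b j).ncard + j ≤ Fintype.card T ∨ V H0 H1 b j = ∅ := by
    intro j
    induction j with
    | zero =>
      left
      simp [V, Set.ncard_univ]
    | succ j ih =>
      rcases ih with h | h
      · by_cases heq : V H0 H1 b (j+1) = V H0 H1 b j
        · right; rw [heq]; exact hstab j heq
        · left
          have hsub : V H0 H1 b (j+1) ⊂ V H0 H1 b j :=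
            ssubset_of_subset_of_ne (V_succ_subset H0 H1 b j) heq
          have hlt : (V H0 H1 b (j+1)).ncard < (V H0 H1 b j).ncard :=
            Set.ncard_lt_ncard hsub (Set.toFinite _)
          omega
      · right
        have := V_succ_subset H0 H1 b j
        rw [h] at this
        exact subset_empty_iff.mp this
  rcases key (Fintype.card T + 1) with h | h
  · exfalso; omega
  · exact ⟨_, h⟩

lemma main_construction [Fintype T] (H0 H1 : Set (Set T)) (b : ℕ)
    (hb : Set.univ ∈ side H0 H1 b 0)
    (hno : ¬∃ P N : Set (Set T),
        P ⊆ H0 ∧ N ⊆ H1 ∧ P.Nonempty ∧ N.Nonempty ∧ ⋃₀ P = ⋃₀ N) :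
    ∃ κ : T → ℕ,
      (∀ X ∈ H0, X.Nonempty → Even (sInf (κ '' X))) ∧
        (∀ X ∈ H1, X.Nonempty → ¬Even (sInf (κ '' X))) := by
  obtain ⟨n, hn⟩ := eventually_empty H0 H1 b (stab H0 H1 b hb hno)
  set W := V H0 H1 b with hW
  -- the level function
  set m : T → ℕ := fun t => sSup {j | t ∈ W j} with hm
  have hS0 : ∀ t : T, 0 ∈ {j | t ∈ W j} := by
    intro t; simp [hW, V]
  have hSbdd : ∀ t : T, BddAbove {j | t ∈ W j} := by
    intro t
    refine ⟨n, fun j hj => ?_⟩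
    by_contra hle
    push_neg at hle
    have : t ∈ W n := V_antitone H0 H1 b (le_of_lt hle) hj
    rw [hn] at this
    exact this
  have hmem : ∀ t : T, t ∈ W (m t) := by
    intro t
    exact Nat.sSup_mem ⟨0, hS0 t⟩ (hSbdd t)
  have hnotmem : ∀ t : T, t ∉ W (m t + 1) := by
    intro t ht
    have : m t + 1 ≤ m t := le_csSup (hSbdd t) ht
    omega
  refine ⟨fun t => b + m t, ?_, ?_⟩
  all_goals
    intro X hX hXne
    set κ : T → ℕ := fun t => b + m t with hκ
    have himne : (κ '' X).Nonempty := hXne.image κ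
    obtain ⟨t₀, ht₀X, ht₀⟩ := Nat.sInf_mem himne
    have hXsub : X ⊆ W (m t₀) := by
      intro t ht
      have h1 : sInf (κ '' X) ≤ κ t := Nat.sInf_le ⟨t, ht, rfl⟩
      rw [← ht₀] at h1
      have : m t₀ ≤ m t := by simp only [hκ] at h1; omega
      exact V_antitone H0 H1 b this (hmem t)
  · -- X ∈ H0 case
    rw [← ht₀]
    by_contra hodd
    have hEv : Even (m t₀ + 1 + b) := by
      have h1 : ¬ Even (b + m t₀) := hodd
      have h2 : m t₀ + 1 + b = (b + m t₀) + 1 := by ring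
      rw [h2, Nat.even_add_one]
      exact h1
    have hside : side H0 H1 b (m t₀ + 1) = H0 := by simp [side, hEv]
    have hXfam : X ∈ Fam H0 H1 b (m t₀ + 1) := ⟨by rw [hside]; exact hX, hXsub⟩
    have : t₀ ∈ W (m t₀ + 1) := by
      rw [hW, V_eq_sUnion]
      exact ⟨X, hXfam, ht₀X⟩
    exact hnotmem t₀ this
  · -- X ∈ H1 case
    rw [← ht₀]
    intro heven
    have hnEv : ¬ Even (m t₀ + 1 + b) := by
      have h2 : m t₀ + 1 + b = (b + m t₀) + 1 := by ring
      rw [h2, Nat.even_add_one]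
      simpa using heven
    have hside : side H0 H1 b (m t₀ + 1) = H1 := by simp [side, hnEv]
    have hXfam : X ∈ Fam H0 H1 b (m t₀ + 1) := ⟨by rw [hside]; exact hX, hXsub⟩
    have : t₀ ∈ W (m t₀ + 1) := by
      rw [hW, V_eq_sUnion]
      exact ⟨X, hXfam, ht₀X⟩
    exact hnotmem t₀ this

end ParityAux

theorem parity_consistency_iff {T : Type*} [Fintype T] [Nonempty T]
    (H0 H1 : Set (Set T)) (hcons : H0 ∩ H1 = ∅)
    (hne : ∀ X ∈ H0 ∪ H1, X.Nonempty)
    (hT : Set.univ ∈ H0 ∪ H1) :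
    (∃ κ : T → ℕ,
        (∀ X ∈ H0, Even (sInf (κ '' X))) ∧ ∀ X ∈ H1, ¬Even (sInf (κ '' X))) ↔
      ¬∃ P N : Set (Set T),
        P ⊆ H0 ∧ N ⊆ H1 ∧ P.Nonempty ∧ N.Nonempty ∧ ⋃₀ P = ⋃₀ N := by
  constructor
  · rintro ⟨κ, h0, h1⟩ ⟨P, N, hP, hN, hPne, hNne, hPN⟩
    have key : ∀ F : Set (Set T), (⋃₀ F).Nonempty →
        ∃ X ∈ F, sInf (κ '' X) = sInf (κ '' ⋃₀ F) := by
      intro F hF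
      have himne : (κ '' ⋃₀ F).Nonempty := hF.image κ
      obtain ⟨t₀, ht₀U, ht₀⟩ := Nat.sInf_mem himne
      obtain ⟨X, hXF, ht₀X⟩ := ht₀U
      refine ⟨X, hXF, le_antisymm ?_ ?_⟩
      · rw [← ht₀]
        exact Nat.sInf_le ⟨t₀, ht₀X, rfl⟩
      · have hmemX : sInf (κ '' X) ∈ κ '' X := Nat.sInf_mem (Set.Nonempty.image κ ⟨t₀, ht₀X⟩)
        obtain ⟨t, htX, ht⟩ := hmemX
        rw [← ht]
        exact Nat.sInf_le ⟨t, ⟨X, hXF, htX⟩, rfl⟩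
    have hUne : (⋃₀ P).Nonempty := by
      obtain ⟨X, hX⟩ := hPne
      obtain ⟨t, ht⟩ := hne X (Or.inl (hP hX))
      exact ⟨t, X, hX, ht⟩
    obtain ⟨X, hXP, hXs⟩ := key P hUne
    obtain ⟨Y, hYN, hYs⟩ := key N (hPN ▸ hUne)
    have heven : Even (sInf (κ '' ⋃₀ P)) := hXs ▸ h0 X (hP hXP)
    have hodd : ¬Even (sInf (κ '' ⋃₀ P)) := by
      rw [hPN]
      exact hYs ▸ h1 Y (hN hYN)
    exact hodd heven
  · intro hno
    rcases hT with hb0 | hb1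
    · have hb : Set.univ ∈ ParityAux.side H0 H1 0 0 := by
        simp [ParityAux.side, hb0]
      obtain ⟨κ, hk0, hk1⟩ := ParityAux.main_construction H0 H1 0 hb hno
      exact ⟨κ, fun X hX => hk0 X hX (hne X (Or.inl hX)),
        fun X hX => hk1 X hX (hne X (Or.inr hX))⟩
    · have hb : Set.univ ∈ ParityAux.side H0 H1 1 0 := by
        simp [ParityAux.side, hb1, Nat.even_add_one]
      obtain ⟨κ, hk0, hk1⟩ := ParityAux.main_construction H0 H1 1 hb hno
      exact ⟨κ, fun X hX => hk0 X hX (hne X (Or.inl hX)),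
        fun X hX => hk1 X hX (hne X (Or.inr hX))⟩
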